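/- Let 0 < ε < 1, let G = (V, E) be a d-regular ε-spectral expander on 2n vertices, and let S ⊆ V be nonempty. Then there exists a vertex v ∈ S whose degree in the induced subgraph G[S] is at least ⌈d(|S|/(2n) − ε)⌉. -/

import Mathlib

open Matrix Finset

/-- The normalized adjacency matrix `Ã = A / d` of a (`d`-regular) graph. -/
noncomputable def normAdj {N : ℕ} (G : SimpleGraph (Fin N)) [DecidableRel G.Adj] (d : ℕ) :
    Matrix (Fin N) (Fin N) ℝ :=
  (d : ℝ)⁻¹ • (SimpleGraph.adjMatrix ℝ G)

/-- `σ₂(Ã) = max(λ₂, |λ_N|)`, expressed via the Rayleigh quotient characterization: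
for a `d`-regular graph the all-ones vector is a top eigenvector (with eigenvalue `λ₁ = 1`),
so `max(λ₂, |λ_N|)` is the supremum of `|xᵀ Ã x|` over unit vectors `x` orthogonal to
the all-ones vector. -/
noncomputable def sigma2 {N : ℕ} (G : SimpleGraph (Fin N)) [DecidableRel G.Adj] (d : ℕ) : ℝ :=
  sSup {r : ℝ | ∃ x : Fin N → ℝ, x ⬝ᵥ x = 1 ∧ (∑ i, x i) = 0 ∧
    r = |x ⬝ᵥ (normAdj G d).mulVec x|}

/-! With `α = |S|/|V|`, the vector `x = 𝟙_S - α` sums to zero, so the spectral bound gives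
`|xᵀ A x| ≤ d σ₂ ‖x‖² = d σ₂ |S| (1 - α)`. Regularity (`A 𝟙 = d 𝟙`) turns `xᵀ A x` into
`Σ_{v ∈ S} deg_S v - d α |S|`, so the average degree of `G[S]` is at least `d (α - σ₂)`,
and some vertex of `S` attains the average. -/

lemma abs_le_one_of_dotProduct_self_eq_one {ι : Type*} [Fintype ι] {x : ι → ℝ}
    (hx : x ⬝ᵥ x = 1) (i : ι) : |x i| ≤ 1 := by
  rw [abs_le_one_iff_mul_self_le_one, ← hx]
  exact single_le_sum (f := fun j => x j * x j) (fun j _ => mul_self_nonneg _) (mem_univ i)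

lemma abs_dotProduct_mulVec_le_sum_abs {ι : Type*} [Fintype ι] (M : Matrix ι ι ℝ) {x : ι → ℝ}
    (hx : ∀ i, |x i| ≤ 1) : |x ⬝ᵥ M *ᵥ x| ≤ ∑ i, ∑ j, |M i j| := by
  calc |x ⬝ᵥ M *ᵥ x| ≤ ∑ i, |x i| * ∑ j, |M i j| * |x j| := by
        refine (abs_sum_le_sum_abs _ _).trans (sum_le_sum fun i _ => ?_)
        rw [abs_mul]
        gcongr
        exact (abs_sum_le_sum_abs _ _).trans_eq (by simp only [abs_mul])
    _ ≤ ∑ i, 1 * ∑ j, |M i j| * 1 := by gcongr with i _ j _ <;> exact hx _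
    _ = ∑ i, ∑ j, |M i j| := by simp

section Spectral

variable {N : ℕ} (G : SimpleGraph (Fin N)) [DecidableRel G.Adj] (d : ℕ)

lemma sigma2_nonneg : 0 ≤ sigma2 G d :=
  Real.sSup_nonneg (by rintro _ ⟨x, -, -, rfl⟩; exact abs_nonneg _)

lemma abs_dotProduct_normAdj_mulVec_le_sigma2 {x : Fin N → ℝ} (hx1 : x ⬝ᵥ x = 1)
    (hx0 : ∑ i, x i = 0) : |x ⬝ᵥ normAdj G d *ᵥ x| ≤ sigma2 G d :=
  le_csSup ⟨∑ i, ∑ j, |normAdj G d i j|, by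
    rintro _ ⟨y, hy, -, rfl⟩
    exact abs_dotProduct_mulVec_le_sum_abs _ (abs_le_one_of_dotProduct_self_eq_one hy)⟩
    ⟨x, hx1, hx0, rfl⟩

lemma abs_dotProduct_normAdj_mulVec_le_sigma2_mul {x : Fin N → ℝ} (hx0 : ∑ i, x i = 0) :
    |x ⬝ᵥ normAdj G d *ᵥ x| ≤ sigma2 G d * (x ⬝ᵥ x) := by
  have hq : 0 ≤ x ⬝ᵥ x := sum_nonneg fun i _ => mul_self_nonneg (x i)
  rcases hq.eq_or_lt with hq | hq
  · simp [dotProduct_self_eq_zero.mp hq.symm]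
  set c := (√(x ⬝ᵥ x))⁻¹
  have hc : c * c = (x ⬝ᵥ x)⁻¹ := by rw [← mul_inv, Real.mul_self_sqrt hq.le]
  have h := abs_dotProduct_normAdj_mulVec_le_sigma2 G d (x := c • x)
    (by rw [smul_dotProduct, dotProduct_smul, smul_smul, smul_eq_mul, hc, inv_mul_cancel₀ hq.ne'])
    (by simp only [Pi.smul_apply, smul_eq_mul, ← mul_sum, hx0, mul_zero])
  rw [mulVec_smul, smul_dotProduct, dotProduct_smul, smul_smul, smul_eq_mul, abs_mul, hc,
    abs_inv, abs_of_pos hq, inv_mul_le_iff₀ hq] at h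
  linarith

lemma abs_dotProduct_adjMatrix_mulVec_le (hd : d ≠ 0) {x : Fin N → ℝ}
    (hx0 : ∑ i, x i = 0) : |x ⬝ᵥ G.adjMatrix ℝ *ᵥ x| ≤ d * sigma2 G d * (x ⬝ᵥ x) := by
  have h := abs_dotProduct_normAdj_mulVec_le_sigma2_mul G d hx0
  rw [normAdj, smul_mulVec, dotProduct_smul, smul_eq_mul, abs_mul, abs_inv, Nat.abs_cast,
    inv_mul_le_iff₀ (by positivity)] at h
  linarith

end Spectral

lemma indicator_dotProduct {V : Type*} [Fintype V] [DecidableEq V] (S : Finset V) (y : V → ℝ) :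
    (fun i => if i ∈ S then 1 else 0) ⬝ᵥ y = ∑ i ∈ S, y i := by
  simp [dotProduct, ite_mul, sum_ite_mem]

lemma sub_const_dotProduct_sub_const {V : Type*} [Fintype V] (x : V → ℝ) (a : ℝ) :
    (x - Function.const V a) ⬝ᵥ (x - Function.const V a) =
      x ⬝ᵥ x - 2 * a * ∑ i, x i + Fintype.card V * a ^ 2 := by
  simp only [dotProduct, Pi.sub_apply, Function.const_apply, sub_mul, mul_sub, sum_sub_distrib,
    ← sum_mul, ← mul_sum, sum_const, card_univ, nsmul_eq_mul]
  ring

namespace SimpleGraph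

variable {V : Type*} [Fintype V] {G : SimpleGraph V} [DecidableRel G.Adj] {d : ℕ}

lemma dotProduct_adjMatrix_mulVec_sub_const (hreg : G.IsRegularOfDegree d) (x : V → ℝ) (a : ℝ) :
    (x - Function.const V a) ⬝ᵥ G.adjMatrix ℝ *ᵥ (x - Function.const V a) =
      x ⬝ᵥ G.adjMatrix ℝ *ᵥ x - 2 * d * a * ∑ i, x i + Fintype.card V * d * a ^ 2 := by
  have hconst : G.adjMatrix ℝ *ᵥ Function.const V a = Function.const V (d * a) :=
    funext fun _ => adjMatrix_mulVec_const_apply_of_regular hreg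
  have hsymm : Function.const V a ⬝ᵥ G.adjMatrix ℝ *ᵥ x =
      x ⬝ᵥ G.adjMatrix ℝ *ᵥ Function.const V a := by
    rw [dotProduct_mulVec, ← mulVec_transpose, transpose_adjMatrix, dotProduct_comm]
  rw [mulVec_sub, dotProduct_sub, sub_dotProduct, sub_dotProduct, hsymm, hconst]
  simp only [dotProduct, Function.const_apply, sum_const, card_univ, nsmul_eq_mul, ← sum_mul]
  ring

variable [DecidableEq V]

lemma adjMatrix_mulVec_indicator (S : Finset V) :
    G.adjMatrix ℝ *ᵥ (fun i => if i ∈ S then 1 else 0) = fun v => (#{u ∈ S | G.Adj v u} : ℝ) := by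
  ext v
  rw [adjMatrix_mulVec_apply, sum_boole]
  congr 2
  ext u
  simp [mem_neighborFinset, and_comm]

lemma mul_card_sub_le_sum_card_filter_adj (hreg : G.IsRegularOfDegree d) {σ : ℝ} (hσ : 0 ≤ σ)
    (hspec : ∀ x : V → ℝ, ∑ i, x i = 0 → |x ⬝ᵥ G.adjMatrix ℝ *ᵥ x| ≤ d * σ * (x ⬝ᵥ x))
    (S : Finset V) :
    d * #S * (#S / Fintype.card V - σ) ≤ ∑ v ∈ S, (#{u ∈ S | G.Adj v u} : ℝ) := by
  set α : ℝ := #S / Fintype.card V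
  have hα : Fintype.card V * α = #S := mul_div_cancel_of_imp' fun h => by
    exact_mod_cast Nat.eq_zero_of_le_zero (card_le_univ S |>.trans_eq (by exact_mod_cast h))
  have hα0 : 0 ≤ α := by positivity
  clear_value α
  set χ : V → ℝ := fun i => if i ∈ S then 1 else 0
  have hχsum : ∑ i, χ i = #S := by simp [χ]
  have hχχ : ∑ i ∈ S, χ i = #S := by simp +contextual [χ]
  have hsum : ∑ i, (χ - Function.const V α) i = 0 := by
    simp [sum_sub_distrib, hχsum, hα]
  have hnorm := sub_const_dotProduct_sub_const χ α
  have hquad := dotProduct_adjMatrix_mulVec_sub_const hreg χ α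
  rw [indicator_dotProduct, hχχ, hχsum] at hnorm
  rw [adjMatrix_mulVec_indicator, indicator_dotProduct, hχsum] at hquad
  have hspecχ := neg_le_of_abs_le (hspec _ hsum)
  rw [hnorm, hquad] at hspecχ
  have hα2 : Fintype.card V * α ^ 2 = α * #S := by rw [sq, ← mul_assoc, hα, mul_comm]
  have hslack : 0 ≤ d * σ * (α * #S) := by positivity
  linear_combination hspecχ + d * (1 + σ) * hα2 + hslack

end SimpleGraph

theorem expander_induced_min_degree_general (n d : ℕ)
    (ε : ℝ)
    (G : SimpleGraph (Fin (2 * n))) [DecidableRel G.Adj]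
    (hreg : G.IsRegularOfDegree d) (hexp : sigma2 G d ≤ ε)
    (S : Finset (Fin (2 * n))) (hS : S.Nonempty) :
    ∃ v ∈ S, ⌈(d : ℝ) * ((S.card : ℝ) / (2 * n) - ε)⌉ ≤
      ((S.filter (fun u => G.Adj v u)).card : ℤ) := by
  rcases eq_or_ne d 0 with rfl | hd
  · obtain ⟨v, hv⟩ := hS
    exact ⟨v, hv, by simp⟩
  have hmixing := SimpleGraph.mul_card_sub_le_sum_card_filter_adj hreg (sigma2_nonneg G d)
    (fun _ hx => abs_dotProduct_adjMatrix_mulVec_le G d hd hx) S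
  rw [Fintype.card_fin, Nat.cast_mul, Nat.cast_ofNat] at hmixing
  have hbound : ∑ _v ∈ S, (d : ℝ) * (#S / (2 * n) - ε) ≤ ∑ v ∈ S, (#{u ∈ S | G.Adj v u} : ℝ) :=
    calc ∑ _v ∈ S, (d : ℝ) * (#S / (2 * n) - ε) = d * #S * (#S / (2 * n) - ε) := by
          rw [sum_const, nsmul_eq_mul]; ring
      _ ≤ d * #S * (#S / (2 * n) - sigma2 G d) := by gcongr
      _ ≤ _ := hmixing
  obtain ⟨v, hv, hle⟩ := exists_le_of_sum_le hS hbound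
  exact ⟨v, hv, Int.ceil_le.mpr (by exact_mod_cast hle)⟩

/-- In a `d`-regular `ε`-spectral expander on `2n` vertices, every nonempty `S ⊆ V`
contains a vertex whose degree in the induced subgraph `G[S]` (i.e. its number of
neighbors inside `S`) is at least `⌈d(|S|/(2n) − ε)⌉`. -/
theorem expander_induced_min_degree (n d : ℕ)
    (ε : ℝ) (hε0 : 0 < ε) (hε1 : ε < 1)
    (G : SimpleGraph (Fin (2 * n))) [DecidableRel G.Adj]
    (hreg : G.IsRegularOfDegree d) (hexp : sigma2 G d ≤ ε)
    (S : Finset (Fin (2 * n))) (hS : S.Nonempty) :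
    ∃ v ∈ S, ⌈(d : ℝ) * ((S.card : ℝ) / (2 * n) - ε)⌉ ≤
      ((S.filter (fun u => G.Adj v u)).card : ℤ) :=
  expander_induced_min_degree_general n d ε G hreg hexp S hS
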